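/- arXiv:2412.00030 — 3 statements merged into one kernel-verified Lean document; each statement's English description precedes it below -/
import Mathlib

section
/- Let ν be a finite measure on a measurable space Ω, let f : Ω → ℝ be bounded measurable, and let h > 0. Then the supremum, over all finite measures m on Ω absolutely continuous with respect to ν such that ∫ (log(dm/dν) − 1) dm is well defined and finite, of the quantity ∫ f dm − h ∫ (log(dm/dν) − 1) dm, equals h ∫ exp(f/h) dν. -/
/-!
Writing `d = dm/dν`, the objective equals `∫ (d f − h d (log d − 1)) dν`. The Fenchel–Young
inequality `a t − a (log a − 1) ≤ exp t` for `a ≥ 0`, applied with `t = f / h`, bounds the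
integrand by `h exp (f / h)`, with equality at `d = exp (f / h)`. Hence the supremum is attained
by the Gibbs measure `exp (f / h) • ν`.
-/

open MeasureTheory Real

lemma mul_sub_mul_log_sub_one_le_exp {a : ℝ} (ha : 0 ≤ a) (t : ℝ) :
    a * t - a * (log a - 1) ≤ exp t := by
  rcases ha.eq_or_lt with rfl | ha
  · simpa using (exp_pos t).le
  calc a * t - a * (log a - 1) = a * (t - log a + 1) := by ring
    _ ≤ a * exp (t - log a) := mul_le_mul_of_nonneg_left (add_one_le_exp _) ha.le
    _ = exp t := by rw [exp_sub, exp_log ha]; field_simp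

section RelativeEntropy

variable {Ω : Type*} [MeasurableSpace Ω] {ν m : Measure Ω} {f : Ω → ℝ} {h : ℝ}

variable [SigmaFinite m] [SigmaFinite ν]

lemma integral_sub_mul_integral_log_rnDeriv_eq (hac : m ≪ ν) (hfm : Integrable f m)
    (hent : Integrable (fun x => log (m.rnDeriv ν x).toReal - 1) m) :
    (∫ x, f x ∂m) - h * ∫ x, (log (m.rnDeriv ν x).toReal - 1) ∂m
      = ∫ x, ((m.rnDeriv ν x).toReal * f x
          - h * ((m.rnDeriv ν x).toReal * (log (m.rnDeriv ν x).toReal - 1))) ∂ν := by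
  rw [← integral_toReal_rnDeriv_mul hac (f := f),
    ← integral_toReal_rnDeriv_mul hac (f := fun x => log (m.rnDeriv ν x).toReal - 1),
    ← integral_const_mul, ← integral_sub]
  · exact (integrable_toReal_rnDeriv_mul_iff hac).2 hfm
  · exact ((integrable_toReal_rnDeriv_mul_iff hac).2 hent).const_mul h

lemma integral_sub_mul_integral_log_rnDeriv_le (hh : 0 < h) (hac : m ≪ ν)
    (hfm : Integrable f m) (hent : Integrable (fun x => log (m.rnDeriv ν x).toReal - 1) m)
    (hexp : Integrable (fun x => exp (f x / h)) ν) :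
    (∫ x, f x ∂m) - h * ∫ x, (log (m.rnDeriv ν x).toReal - 1) ∂m
      ≤ h * ∫ x, exp (f x / h) ∂ν := by
  rw [integral_sub_mul_integral_log_rnDeriv_eq hac hfm hent, ← integral_const_mul]
  refine integral_mono ?_ (hexp.const_mul h) fun x => ?_
  · exact ((integrable_toReal_rnDeriv_mul_iff hac).2 hfm).sub
      (((integrable_toReal_rnDeriv_mul_iff hac).2 hent).const_mul h)
  set d := (m.rnDeriv ν x).toReal
  calc d * f x - h * (d * (log d - 1)) = h * (d * (f x / h) - d * (log d - 1)) := by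
        field_simp
    _ ≤ h * exp (f x / h) :=
        mul_le_mul_of_nonneg_left (mul_sub_mul_log_sub_one_le_exp ENNReal.toReal_nonneg _) hh.le

end RelativeEntropy

section GibbsMeasure

variable {Ω : Type*} [MeasurableSpace Ω] {ν : Measure Ω} {f : Ω → ℝ} {h : ℝ}

noncomputable def gibbsMeasure (ν : Measure Ω) (g : Ω → ℝ) : Measure Ω :=
  ν.withDensity fun x => ENNReal.ofReal (exp (g x))

variable {g : Ω → ℝ}

lemma gibbsMeasure_absolutelyContinuous (ν : Measure Ω) (g : Ω → ℝ) : gibbsMeasure ν g ≪ ν :=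
  withDensity_absolutelyContinuous _ _

lemma isFiniteMeasure_gibbsMeasure (hg : Integrable (fun x => exp (g x)) ν) :
    IsFiniteMeasure (gibbsMeasure ν g) :=
  isFiniteMeasure_withDensity_ofReal hg.2

variable [SigmaFinite ν]

lemma toReal_rnDeriv_gibbsMeasure (hg : Measurable g) :
    (fun x => ((gibbsMeasure ν g).rnDeriv ν x).toReal) =ᵐ[ν] fun x => exp (g x) := by
  filter_upwards [Measure.rnDeriv_withDensity ν hg.exp.ennreal_ofReal] with x hx
  rw [gibbsMeasure, hx, ENNReal.toReal_ofReal (exp_pos _).le]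

lemma integrable_log_rnDeriv_gibbsMeasure_sub_one (hg : Measurable g)
    [IsFiniteMeasure (gibbsMeasure ν g)] (hgm : Integrable g (gibbsMeasure ν g)) :
    Integrable (fun x => log ((gibbsMeasure ν g).rnDeriv ν x).toReal - 1) (gibbsMeasure ν g) := by
  refine (hgm.sub (integrable_const 1)).congr ?_
  filter_upwards [(gibbsMeasure_absolutelyContinuous ν g).ae_le (toReal_rnDeriv_gibbsMeasure hg)]
    with x hx
  simp [hx]

lemma integral_sub_mul_integral_log_rnDeriv_gibbsMeasure (hh : h ≠ 0) (hf : Measurable f)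
    [IsFiniteMeasure (gibbsMeasure ν (f · / h))] (hfm : Integrable f (gibbsMeasure ν (f · / h))) :
    (∫ x, f x ∂gibbsMeasure ν (f · / h)) - h * ∫ x,
        (log ((gibbsMeasure ν (f · / h)).rnDeriv ν x).toReal - 1) ∂gibbsMeasure ν (f · / h)
      = h * ∫ x, exp (f x / h) ∂ν := by
  have hent := integrable_log_rnDeriv_gibbsMeasure_sub_one (hf.div_const h) (hfm.div_const h)
  rw [integral_sub_mul_integral_log_rnDeriv_eq (gibbsMeasure_absolutelyContinuous _ _) hfm hent,
    ← integral_const_mul]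
  refine integral_congr_ae ?_
  filter_upwards [toReal_rnDeriv_gibbsMeasure (ν := ν) (hf.div_const h)] with x hx
  simp only [hx, log_exp]
  field_simp
  ring

end GibbsMeasure

/-- The Legendre–Fenchel conjugate of the scaled (un-normalized) relative entropy
`m ↦ h·∫(log(dm/dν) − 1)dm`: for bounded measurable `f` and `h > 0`, the supremum over
finite measures `m ≪ ν` with well-defined finite entropy of `∫f dm − h∫(log(dm/dν) − 1)dm`
equals `h ∫ exp(f/h) dν`. -/
theorem sSup_entropy_dual {Ω : Type*} [MeasurableSpace Ω] (ν : Measure Ω) [IsFiniteMeasure ν]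
    (f : Ω → ℝ) (hf : Measurable f) (hbd : ∃ C : ℝ, ∀ x, |f x| ≤ C)
    (h : ℝ) (hh : 0 < h) :
    sSup {v : ℝ | ∃ m : Measure Ω, IsFiniteMeasure m ∧ m ≪ ν ∧
        Integrable (fun x => Real.log ((m.rnDeriv ν x).toReal) - 1) m ∧
        v = (∫ x, f x ∂m) - h * ∫ x, (Real.log ((m.rnDeriv ν x).toReal) - 1) ∂m}
      = h * ∫ x, Real.exp (f x / h) ∂ν := by
  obtain ⟨C, hC⟩ := hbd
  have hfm (m : Measure Ω) [IsFiniteMeasure m] : Integrable f m :=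
    .of_bound hf.aestronglyMeasurable C (ae_of_all _ hC)
  have hexp : Integrable (fun x => exp (f x / h)) ν := by
    refine .of_bound (hf.div_const h).exp.aestronglyMeasurable (exp (C / h))
      (ae_of_all _ fun x => ?_)
    rw [norm_of_nonneg (exp_pos _).le, exp_le_exp]
    exact div_le_div_of_nonneg_right (le_of_abs_le (hC x)) hh.le
  have := isFiniteMeasure_gibbsMeasure hexp
  refine IsGreatest.csSup_eq ⟨⟨gibbsMeasure ν (f · / h), inferInstance,
    gibbsMeasure_absolutelyContinuous _ _,
    integrable_log_rnDeriv_gibbsMeasure_sub_one (hf.div_const h) ((hfm _).div_const h),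
    (integral_sub_mul_integral_log_rnDeriv_gibbsMeasure hh.ne' hf (hfm _)).symm⟩, ?_⟩
  rintro v ⟨m, hm, hac, hent, rfl⟩
  exact integral_sub_mul_integral_log_rnDeriv_le hh hac (hfm m) hent hexp
end

section
/- Let ν be a finite measure on a measurable space Ω, let f : Ω → ℝ be bounded measurable, and let h > 0. The measure m* with density exp(f/h) with respect to ν satisfies ∫ f dm* − h ∫ (log(dm*/dν) − 1) dm* = h ∫ exp(f/h) dν, and m* is the unique maximizer of m ↦ ∫ f dm − h ∫ (log(dm/dν) − 1) dm among finite measures m ≪ ν for which this quantity is well defined and finite. -/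
open MeasureTheory

/-- The objective `m ↦ ∫ f dm − h ∫ (log(dm/dν) − 1) dm`. -/
noncomputable def entropyObjective {Ω : Type*} [MeasurableSpace Ω] (ν : Measure Ω)
    (f : Ω → ℝ) (h : ℝ) (m : Measure Ω) : ℝ :=
  (∫ x, f x ∂m) - h * ∫ x, (Real.log ((m.rnDeriv ν x).toReal) - 1) ∂m

/-! For `t ≥ 0` and `h > 0` the Fenchel–Young inequality `t (a - h (log t - 1)) ≤ h exp (a / h)`
(the conjugate of `t ↦ h t (log t - 1)` is `a ↦ h exp (a / h)`) holds, with equality exactly at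
`t = exp (a / h)`. The objective of `m ≪ ν` is the `ν`-integral of the left side with
`t = dm/dν` and `a = f`, so integrating gives the value `h ∫ exp (f / h) dν` at `m*` and a strict
inequality whenever `dm/dν ≠ exp (f / h)` on a set of positive `ν`-measure, that is, whenever
`m ≠ m*`. -/

open Real

theorem mul_sub_log_add_one_lt_exp {t u : ℝ} (ht : 0 ≤ t) (hne : t ≠ exp u) :
    t * (u - log t + 1) < exp u := by
  rcases ht.eq_or_lt with rfl | ht
  · simpa using exp_pos u
  have hu : u - log t ≠ 0 := fun h0 => hne <| by rw [sub_eq_zero.1 h0, exp_log ht]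
  calc t * (u - log t + 1) < t * exp (u - log t) := by
        gcongr
        exact add_one_lt_exp hu
    _ = exp u := by rw [exp_sub, exp_log ht]; field_simp

theorem mul_sub_log_add_one_le_exp {t u : ℝ} (ht : 0 ≤ t) :
    t * (u - log t + 1) ≤ exp u := by
  rcases eq_or_ne t (exp u) with rfl | hne
  · simp [log_exp]
  · exact (mul_sub_log_add_one_lt_exp ht hne).le

theorem mul_sub_mul_log_sub_one_eq {h : ℝ} (hh : h ≠ 0) (t a : ℝ) :
    t * (a - h * (log t - 1)) = h * (t * (a / h - log t + 1)) := by
  field_simp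
  ring

theorem integral_lt_integral_of_ae_le_of_measure_setOf_lt_ne_zero {α : Type*}
    [MeasurableSpace α] {μ : Measure α} {f g : α → ℝ}
    (hfi : Integrable f μ) (hgi : Integrable g μ)
    (hle : f ≤ᵐ[μ] g) (hlt : μ {x | f x < g x} ≠ 0) :
    ∫ x, f x ∂μ < ∫ x, g x ∂μ := by
  rw [← sub_pos, ← integral_sub hgi hfi,
    integral_pos_iff_support_of_nonneg_ae (hle.mono fun x => sub_nonneg.2)
      (hgi.sub hfi)]
  exact pos_iff_ne_zero.2 fun h0 =>
    hlt (measure_mono_null (fun x hx => (sub_pos.2 hx).ne') h0)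

section

variable {Ω : Type*} [MeasurableSpace Ω] {ν m : Measure Ω}

theorem eq_withDensity_ofReal_iff_toReal_rnDeriv_ae_eq [SigmaFinite m] [SigmaFinite ν]
    (hmν : m ≪ ν) {e : Ω → ℝ} (he : Measurable e) (he0 : ∀ x, 0 ≤ e x) :
    m = ν.withDensity (fun x => ENNReal.ofReal (e x)) ↔
      (fun x => (m.rnDeriv ν x).toReal) =ᵐ[ν] e := by
  constructor
  · rintro rfl
    filter_upwards [Measure.rnDeriv_withDensity ν he.ennreal_ofReal] with x hx
    rw [hx, ENNReal.toReal_ofReal (he0 x)]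
  · intro hae
    rw [← Measure.withDensity_rnDeriv_eq m ν hmν]
    refine withDensity_congr_ae ?_
    filter_upwards [hae, Measure.rnDeriv_lt_top m ν] with x hx hlt
    rw [← hx, ENNReal.ofReal_toReal hlt.ne]

variable {f : Ω → ℝ} {h : ℝ}

theorem entropyObjective_eq_integral_rnDeriv [m.HaveLebesgueDecomposition ν] [SigmaFinite m]
    (hmν : m ≪ ν) (hf : Integrable f m)
    (hlog : Integrable (fun x => log (m.rnDeriv ν x).toReal - 1) m) :
    entropyObjective ν f h m = ∫ x, (m.rnDeriv ν x).toReal *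
      (f x - h * (log (m.rnDeriv ν x).toReal - 1)) ∂ν := by
  rw [entropyObjective, ← integral_const_mul, ← integral_sub hf (hlog.const_mul h)]
  exact (integral_rnDeriv_smul hmν).symm

theorem entropyObjective_lt_of_not_toReal_rnDeriv_ae_eq [m.HaveLebesgueDecomposition ν]
    [SigmaFinite m] (hh : 0 < h) (hmν : m ≪ ν) (hf : Integrable f m)
    (hlog : Integrable (fun x => log (m.rnDeriv ν x).toReal - 1) m)
    (hexp : Integrable (fun x => exp (f x / h)) ν)
    (hne : ¬ (fun x => (m.rnDeriv ν x).toReal) =ᵐ[ν] fun x => exp (f x / h)) :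
    entropyObjective ν f h m < h * ∫ x, exp (f x / h) ∂ν := by
  rw [entropyObjective_eq_integral_rnDeriv hmν hf hlog, ← integral_const_mul]
  refine integral_lt_integral_of_ae_le_of_measure_setOf_lt_ne_zero
    ((integrable_toReal_rnDeriv_mul_iff hmν).2 (hf.sub (hlog.const_mul h)))
    (hexp.const_mul h) (ae_of_all _ fun x => ?_) fun hnull => hne ?_
  · dsimp only
    rw [mul_sub_mul_log_sub_one_eq hh.ne']
    exact mul_le_mul_of_nonneg_left (mul_sub_log_add_one_le_exp ENNReal.toReal_nonneg) hh.le
  · refine measure_mono_null (fun x hx => ?_) hnull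
    rw [Set.mem_ofPred_eq, mul_sub_mul_log_sub_one_eq hh.ne']
    exact mul_lt_mul_of_pos_left (mul_sub_log_add_one_lt_exp ENNReal.toReal_nonneg hx) hh

theorem entropyObjective_withDensity_exp [SigmaFinite ν] (hh : h ≠ 0) (hf : Measurable f)
    [IsFiniteMeasure (ν.withDensity fun x => ENNReal.ofReal (exp (f x / h)))]
    (hfi : Integrable f (ν.withDensity fun x => ENNReal.ofReal (exp (f x / h)))) :
    entropyObjective ν f h (ν.withDensity fun x => ENNReal.ofReal (exp (f x / h)))
      = h * ∫ x, exp (f x / h) ∂ν := by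
  set mstar := ν.withDensity fun x => ENNReal.ofReal (exp (f x / h))
  have hmν : mstar ≪ ν := withDensity_absolutelyContinuous _ _
  have hrn := (eq_withDensity_ofReal_iff_toReal_rnDeriv_ae_eq hmν (by fun_prop)
    fun x => (exp_pos (f x / h)).le).1 rfl
  have hlog : (fun x => log (mstar.rnDeriv ν x).toReal - 1) =ᵐ[mstar] fun x => f x / h - 1 :=
    hmν.ae_le (by filter_upwards [hrn] with x hx; rw [hx, log_exp])
  rw [entropyObjective_eq_integral_rnDeriv hmν hfi
    (((hfi.div_const h).sub (integrable_const 1)).congr hlog.symm), ← integral_const_mul]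
  refine integral_congr_ae ?_
  filter_upwards [hrn] with x hx
  rw [hx, log_exp]
  field_simp
  ring

end

/-- The measure `m*` with density `exp(f/h)` with respect to `ν` attains the value
`h ∫ exp(f/h) dν` of the objective `m ↦ ∫ f dm − h ∫ (log(dm/dν) − 1) dm`, and it is the
unique maximizer among finite measures `m ≪ ν` for which the objective is well defined
and finite. -/
theorem entropyObjective_unique_max {Ω : Type*} [MeasurableSpace Ω] (ν : Measure Ω)
    [IsFiniteMeasure ν] (f : Ω → ℝ) (hf : Measurable f) (hbd : ∃ C : ℝ, ∀ x, |f x| ≤ C)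
    (h : ℝ) (hh : 0 < h) :
    entropyObjective ν f h (ν.withDensity fun x => ENNReal.ofReal (Real.exp (f x / h)))
        = h * ∫ x, Real.exp (f x / h) ∂ν
    ∧ ∀ m : Measure Ω, IsFiniteMeasure m → m ≪ ν →
        Integrable (fun x => Real.log ((m.rnDeriv ν x).toReal) - 1) m →
        m ≠ ν.withDensity (fun x => ENNReal.ofReal (Real.exp (f x / h))) →
        entropyObjective ν f h m
          < entropyObjective ν f h
              (ν.withDensity fun x => ENNReal.ofReal (Real.exp (f x / h))) := by
  obtain ⟨C, hC⟩ := hbd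
  have hfi (μ : Measure Ω) [IsFiniteMeasure μ] : Integrable f μ :=
    .of_bound hf.aestronglyMeasurable C (ae_of_all _ hC)
  have hexp : Integrable (fun x => exp (f x / h)) ν := by
    refine .of_bound (by fun_prop) (exp (C / h)) (ae_of_all _ fun x => ?_)
    rw [norm_of_nonneg (exp_pos _).le, exp_le_exp]
    exact div_le_div_of_nonneg_right (abs_le.1 (hC x)).2 hh.le
  have := isFiniteMeasure_withDensity_ofReal hexp.2
  have hval := entropyObjective_withDensity_exp (ν := ν) hh.ne' hf (hfi _)
  refine ⟨hval, fun m _ hmν hlog hne => ?_⟩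
  rw [hval]
  refine entropyObjective_lt_of_not_toReal_rnDeriv_ae_eq hh hmν (hfi m) hlog hexp fun hae => ?_
  exact hne ((eq_withDensity_ofReal_iff_toReal_rnDeriv_ae_eq hmν (by fun_prop)
    fun x => (exp_pos _).le).2 hae)
end

section
/- Let N ≥ 1, let μ₀, …, μ_N be σ-finite measures on ℝ, and let g_k : ℝ × ℝ → [0, ∞) be measurable for k = 0, …, N−1, such that the function (x₀, …, x_N) ↦ ∏_{k=0}^{N−1} g_k(x_k, x_{k+1}) is integrable with respect to the product measure μ₀ ⊗ ⋯ ⊗ μ_N. Let P be the measure on ℝ^{N+1} with this density with respect to μ₀ ⊗ ⋯ ⊗ μ_N. Then for each i ∈ {0, …, N}, the pushforward of P under the i-th coordinate projection has density x ↦ u_i(x) · d_i(x) with respect to μ_i, where u_i(x) = ∫ ∏_{k=0}^{i−1} g_k(x_k, x_{k+1}) d(μ₀ ⊗ ⋯ ⊗ μ_{i−1}) evaluated with x_i = x (and u_0 ≡ 1), and d_i(x) = ∫ ∏_{k=i}^{N−1} g_k(x_k, x_{k+1}) d(μ_{i+1} ⊗ ⋯ ⊗ μ_N) evaluated with x_i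 = x (and d_N ≡ 1). -/
/-!
Fixing the `i`-th coordinate splits `μ₀ ⊗ ⋯ ⊗ μ_N` as `μ_i ⊗ (⊗_{j ≠ i} μ_j)`, so by Tonelli the
law of `x_i` under `P` has density `x ↦ ∫ ∏_k g_k(x_k, x_{k+1}) d(⊗_{j ≠ i} μ_j)` with `x_i = x`.
With `x_i` fixed, the path product is a product of a factor depending only on `x₀, …, x_{i-1}`
and one depending only on `x_{i+1}, …, x_N`, so this integral factorizes as `u_i(x) · d_i(x)`.
-/

open MeasureTheory
open scoped ENNReal

/-- The pairwise-factorized density `(x₀,…,x_N) ↦ ∏_{k=0}^{N−1} g_k(x_k, x_{k+1})`. -/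
noncomputable def pathProd (N : ℕ) (g : Fin N → ℝ → ℝ → ℝ) (x : Fin (N + 1) → ℝ) : ℝ≥0∞ :=
  ∏ k : Fin N, ENNReal.ofReal (g k (x k.castSucc) (x k.succ))

/-- The "up" potential `u_i(x) = ∫ ∏_{k=0}^{i−1} g_k(x_k, x_{k+1}) d(μ₀ ⊗ ⋯ ⊗ μ_{i−1})`,
with the `i`-th coordinate fixed at `x` (so `u_0 ≡ 1`). -/
noncomputable def upPot (N : ℕ) (μ : Fin (N + 1) → Measure ℝ) (g : Fin N → ℝ → ℝ → ℝ)
    (i : ℕ) (hi : i ≤ N) (x : ℝ) : ℝ≥0∞ :=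
  ∫⁻ y : Fin i → ℝ,
    ∏ k : Fin i,
      ENNReal.ofReal (g (Fin.castLE hi k)
        ((Fin.snoc y x : Fin (i + 1) → ℝ) k.castSucc)
        ((Fin.snoc y x : Fin (i + 1) → ℝ) k.succ))
    ∂(Measure.pi fun j : Fin i => μ (Fin.castLE (by omega) j))

/-- The "down" potential `d_i(x) = ∫ ∏_{k=i}^{N−1} g_k(x_k, x_{k+1}) d(μ_{i+1} ⊗ ⋯ ⊗ μ_N)`,
with the `i`-th coordinate fixed at `x` (so `d_N ≡ 1`). -/
noncomputable def downPot (N : ℕ) (μ : Fin (N + 1) → Measure ℝ) (g : Fin N → ℝ → ℝ → ℝ)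
    (i : ℕ) (hi : i ≤ N) (x : ℝ) : ℝ≥0∞ :=
  ∫⁻ y : Fin (N - i) → ℝ,
    ∏ l : Fin (N - i),
      ENNReal.ofReal (g ⟨i + l.val, by have := l.isLt; omega⟩
        ((Fin.cons x y : Fin (N - i + 1) → ℝ) l.castSucc)
        ((Fin.cons x y : Fin (N - i + 1) → ℝ) l.succ))
    ∂(Measure.pi fun j : Fin (N - i) => μ ⟨i + 1 + j.val, by have := j.isLt; omega⟩)

theorem map_eval_withDensity_pi {n : ℕ} {X : Fin (n + 1) → Type*} [∀ j, MeasurableSpace (X j)]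
    (μ : ∀ j, Measure (X j)) [∀ j, SigmaFinite (μ j)] {f : (∀ j, X j) → ℝ≥0∞}
    (hf : Measurable f) (i : Fin (n + 1)) :
    ((Measure.pi μ).withDensity f).map (fun x => x i) =
      (μ i).withDensity fun x =>
        ∫⁻ y, f (i.insertNth x y) ∂Measure.pi fun j => μ (i.succAbove j) := by
  let e := MeasurableEquiv.piFinSuccAbove X i
  ext s hs
  have hpre : (fun x : ∀ j, X j => x i) ⁻¹' s = e ⁻¹' (s ×ˢ Set.univ) := by ext; simp [e]
  rw [Measure.map_apply (measurable_pi_apply i) hs, withDensity_apply _ (measurable_pi_apply i hs),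
    withDensity_apply _ hs, hpre]
  calc ∫⁻ x in e ⁻¹' (s ×ˢ Set.univ), f x ∂Measure.pi μ
      = ∫⁻ x in e ⁻¹' (s ×ˢ Set.univ), f (e.symm (e x)) ∂Measure.pi μ := by
        simp only [e.symm_apply_apply]
    _ = ∫⁻ p in s ×ˢ Set.univ, f (e.symm p) ∂(μ i).prod (Measure.pi fun j => μ (i.succAbove j)) :=
        (measurePreserving_piFinSuccAbove μ i).setLIntegral_comp_preimage (hs.prod .univ)
          (hf.comp e.symm.measurable)
    _ = _ := by
        rw [setLIntegral_prod (fun p => f (e.symm p)) (hf.comp e.symm.measurable).aemeasurable,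
          Measure.restrict_univ]
        rfl

theorem lintegral_pi_mul_of_sumEquiv {X ι κ τ : Type*} [MeasurableSpace X] [Fintype ι] [Fintype κ]
    [Fintype τ] (e : ι ⊕ κ ≃ τ) (ν : τ → Measure X) [∀ t, SigmaFinite (ν t)]
    {F : (ι → X) → ℝ≥0∞} {G : (κ → X) → ℝ≥0∞} (hF : Measurable F) (hG : Measurable G) :
    ∫⁻ y, F (fun j => y (e (.inl j))) * G (fun l => y (e (.inr l))) ∂Measure.pi ν =
      (∫⁻ a, F a ∂Measure.pi fun j => ν (e (.inl j))) *
        ∫⁻ b, G b ∂Measure.pi fun l => ν (e (.inr l)) := by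
  have hΦ := (measurePreserving_piCongrLeft ν e).comp
    (measurePreserving_sumPiEquivProdPi_symm fun s => ν (e s))
  rw [← hΦ.lintegral_comp (by fun_prop), ← lintegral_prod_mul hF.aemeasurable hG.aemeasurable]
  congr with ⟨a, b⟩
  simp only [Function.comp_apply, MeasurableEquiv.coe_piCongrLeft,
    MeasurableEquiv.coe_sumPiEquivProdPi_symm, Equiv.piCongrLeft_sumInl, Equiv.piCongrLeft_sumInr]

lemma measurable_pathProd (N : ℕ) {g : Fin N → ℝ → ℝ → ℝ}
    (hg : ∀ k, Measurable (Function.uncurry (g k))) : Measurable (pathProd N g) :=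
  Finset.measurable_prod _ fun k _ =>
    ((hg k).comp (f := fun x : Fin (N + 1) → ℝ => (x k.castSucc, x k.succ))
      (by fun_prop)).ennreal_ofReal

def finSumFinSubEquiv {i N : ℕ} (hi : i ≤ N) : Fin i ⊕ Fin (N - i) ≃ Fin N :=
  finSumFinEquiv.trans (finCongr (Nat.add_sub_cancel' hi))

@[simp]
lemma finSumFinSubEquiv_inl {i N : ℕ} (hi : i ≤ N) (j : Fin i) :
    finSumFinSubEquiv hi (.inl j) = Fin.castLE hi j :=
  rfl

@[simp]
lemma finSumFinSubEquiv_inr {i N : ℕ} (hi : i ≤ N) (l : Fin (N - i)) :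
    finSumFinSubEquiv hi (.inr l) = ⟨i + l, by omega⟩ :=
  rfl

lemma pathProd_eq_mul (N : ℕ) (g : Fin N → ℝ → ℝ → ℝ) {i : ℕ} (hi : i ≤ N)
    (z : Fin (N + 1) → ℝ) :
    pathProd N g z =
      pathProd i (fun k => g (Fin.castLE hi k)) (fun m => z (Fin.castLE (by omega) m)) *
        pathProd (N - i) (fun l => g ⟨i + l, by omega⟩) (fun m => z ⟨i + m, by omega⟩) := by
  rw [pathProd, ← (finSumFinSubEquiv hi).prod_comp, Fintype.prod_sum_type]
  rfl

lemma Fin.succAbove_castLE {N : ℕ} (i : Fin (N + 1)) (j : Fin i) :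
    i.succAbove (Fin.castLE (Nat.lt_succ_iff.mp i.isLt) j) = Fin.castLE (by omega) j :=
  Fin.succAbove_of_castSucc_lt _ _ j.isLt

lemma Fin.succAbove_add {N : ℕ} (i : Fin (N + 1)) (l : Fin (N - i)) :
    i.succAbove ⟨i + l, by omega⟩ = ⟨i + 1 + l, by omega⟩ := by
  rw [Fin.succAbove_of_le_castSucc _ _ (by simp [Fin.le_def])]
  ext; simp; omega

lemma Fin.insertNth_comp_castLE {X : Type*} {N : ℕ} (i : Fin (N + 1)) (x : X) (y : Fin N → X) :
    (fun m : Fin (i + 1) => Fin.insertNth (α := fun _ => X) i x y (Fin.castLE i.isLt m)) =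
      (Fin.snoc (fun j : Fin i => y (Fin.castLE (Nat.lt_succ_iff.mp i.isLt) j)) x :
        Fin (i + 1) → X) := by
  funext m
  induction m using Fin.lastCases with
  | last => simp [show Fin.castLE i.isLt (Fin.last i) = i from rfl]
  | cast j => simp [← i.succAbove_castLE j]

lemma Fin.insertNth_comp_add {X : Type*} {N : ℕ} (i : Fin (N + 1)) (x : X) (y : Fin N → X) :
    (fun m : Fin (N - i + 1) => Fin.insertNth (α := fun _ => X) i x y ⟨i + m, by omega⟩) =
      (Fin.cons x (fun l : Fin (N - i) => y ⟨i + l, by omega⟩) : Fin (N - i + 1) → X) := by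
  funext m
  induction m using Fin.cases with
  | zero => simp
  | succ l =>
    have : (⟨i + l.succ, by omega⟩ : Fin (N + 1)) = i.succAbove ⟨i + l, by omega⟩ := by
      rw [i.succAbove_add]; ext; simp; omega
    rw [Fin.cons_succ, this, Fin.insertNth_apply_succAbove]

lemma lintegral_pathProd_insertNth (N : ℕ) (μ : Fin (N + 1) → Measure ℝ) [∀ j, SigmaFinite (μ j)]
    {g : Fin N → ℝ → ℝ → ℝ} (hg : ∀ k, Measurable (Function.uncurry (g k)))
    (i : Fin (N + 1)) (x : ℝ) :
    ∫⁻ y, pathProd N g (i.insertNth x y) ∂Measure.pi (fun j => μ (i.succAbove j)) =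
      upPot N μ g i (Nat.lt_succ_iff.mp i.isLt) x *
        downPot N μ g i (Nat.lt_succ_iff.mp i.isLt) x := by
  have hi : (i : ℕ) ≤ N := Nat.lt_succ_iff.mp i.isLt
  have hF : Measurable fun a : Fin i → ℝ =>
      pathProd i (fun k => g (Fin.castLE hi k)) (Fin.snoc a x) :=
    (measurable_pathProd _ fun k => hg _).comp (by fun_prop)
  have hG : Measurable fun b : Fin (N - i) → ℝ =>
      pathProd (N - i) (fun l => g ⟨i + l, by omega⟩) (Fin.cons x b) :=
    (measurable_pathProd _ fun k => hg _).comp (by fun_prop)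
  have := lintegral_pi_mul_of_sumEquiv (finSumFinSubEquiv hi) (fun j => μ (i.succAbove j)) hF hG
  simp only [finSumFinSubEquiv_inl, finSumFinSubEquiv_inr, Fin.succAbove_castLE,
    Fin.succAbove_add] at this
  simp only [pathProd_eq_mul N g hi, Fin.insertNth_comp_castLE, Fin.insertNth_comp_add]
  -- the integrands of `upPot` and `downPot` unfold to these path products
  exact this

theorem map_eval_withDensity_pathProd_general (N : ℕ)
    (μ : Fin (N + 1) → Measure ℝ) (hμ : ∀ j, SigmaFinite (μ j))
    (g : Fin N → ℝ → ℝ → ℝ)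
    (hg : ∀ k, Measurable (Function.uncurry (g k))) :
    ∀ i : Fin (N + 1),
      Measure.map (fun x : Fin (N + 1) → ℝ => x i)
          ((Measure.pi μ).withDensity (pathProd N g))
        = (μ i).withDensity fun x =>
            upPot N μ g i.val (Nat.lt_succ_iff.mp i.isLt) x
              * downPot N μ g i.val (Nat.lt_succ_iff.mp i.isLt) x := by
  intro i
  rw [map_eval_withDensity_pi μ (measurable_pathProd N hg) i]
  simp_rw [lintegral_pathProd_insertNth N μ hg i]

/-- Single-time marginal of a pairwise-factorized measure: if `P` has density
`∏_k g_k(x_k, x_{k+1})` with respect to `μ₀ ⊗ ⋯ ⊗ μ_N`, then the law of the `i`-th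
coordinate under `P` has density `u_i · d_i` with respect to `μ_i`. -/
theorem map_eval_withDensity_pathProd (N : ℕ) (hN : 1 ≤ N)
    (μ : Fin (N + 1) → Measure ℝ) (hμ : ∀ j, SigmaFinite (μ j))
    (g : Fin N → ℝ → ℝ → ℝ)
    (hg : ∀ k, Measurable (Function.uncurry (g k)))
    (hg0 : ∀ k x y, 0 ≤ g k x y)
    (hint : (∫⁻ x : Fin (N + 1) → ℝ, pathProd N g x ∂(Measure.pi μ)) ≠ ⊤) :
    ∀ i : Fin (N + 1),
      Measure.map (fun x : Fin (N + 1) → ℝ => x i)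
          ((Measure.pi μ).withDensity (pathProd N g))
        = (μ i).withDensity fun x =>
            upPot N μ g i.val (Nat.lt_succ_iff.mp i.isLt) x
              * downPot N μ g i.val (Nat.lt_succ_iff.mp i.isLt) x :=
  map_eval_withDensity_pathProd_general N μ hμ g hg
end
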